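/- Let R be a finite commutative local ring, G = GL_n(R), L the diagonal subgroup, and χ = χ_1 ∘ det restricted to L, i.e., χ = χ_1^{⊗n} for a single character χ_1 of R^×. Then the map g ↦ χ_1(det g)·g extends linearly to an algebra automorphism of C[G] carrying e_χ e_U e_V C[G] e_U e_V e_χ isomorphically onto e_L e_U e_V C[G] e_U e_V e_L; in particular End_G(i(χ)) ≅ End_G(i(1_L)). -/

import Mathlib

open Matrix MonoidAlgebra

namespace PS

variable {n : ℕ} {R : Type*} [CommRing R]

/-- `g` is upper unitriangular. -/
def IsU (g : GL (Fin n) R) : Prop :=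
  (∀ i : Fin n, (g : Matrix (Fin n) (Fin n) R) i i = 1) ∧
    ∀ i j : Fin n, j < i → (g : Matrix (Fin n) (Fin n) R) i j = 0

/-- `g` is lower unitriangular. -/
def IsV (g : GL (Fin n) R) : Prop :=
  (∀ i : Fin n, (g : Matrix (Fin n) (Fin n) R) i i = 1) ∧
    ∀ i j : Fin n, i < j → (g : Matrix (Fin n) (Fin n) R) i j = 0

/-- `g` is diagonal. -/
def IsL (g : GL (Fin n) R) : Prop :=
  ∀ i j : Fin n, i ≠ j → (g : Matrix (Fin n) (Fin n) R) i j = 0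

/-- `g` is a permutation matrix. -/
def IsW (g : GL (Fin n) R) : Prop :=
  ∃ σ : Equiv.Perm (Fin n), (g : Matrix (Fin n) (Fin n) R) = σ.permMatrix R

def Uset (n : ℕ) (R : Type*) [CommRing R] : Set (GL (Fin n) R) := {g | IsU g}
def Vset (n : ℕ) (R : Type*) [CommRing R] : Set (GL (Fin n) R) := {g | IsV g}
def Lset (n : ℕ) (R : Type*) [CommRing R] : Set (GL (Fin n) R) := {g | IsL g}
def Wset (n : ℕ) (R : Type*) [CommRing R] : Set (GL (Fin n) R) := {g | IsW g}

/-- the diagonal element of `GL n R` with unit entries `d`. -/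
def diagGL (d : Fin n → Rˣ) : GL (Fin n) R :=
  ⟨Matrix.diagonal fun i => (d i : R), Matrix.diagonal fun i => ((d i)⁻¹ : Rˣ),
   by rw [Matrix.diagonal_mul_diagonal]; convert Matrix.diagonal_one using 2; simp,
   by rw [Matrix.diagonal_mul_diagonal]; convert Matrix.diagonal_one using 2; simp⟩

/-- the permutation matrix of `σ`, as an element of `GL n R`. -/
def permGL (σ : Equiv.Perm (Fin n)) : GL (Fin n) R :=
  ⟨σ.permMatrix R, (σ⁻¹).permMatrix R,
   by
    simp only [Equiv.Perm.permMatrix, ← PEquiv.toMatrix_trans, ← Equiv.toPEquiv_trans]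
    simp [Equiv.Perm.inv_def, Equiv.self_trans_symm, Equiv.symm_trans_self, Equiv.toPEquiv_refl, PEquiv.toMatrix_refl],
   by
    simp only [Equiv.Perm.permMatrix, ← PEquiv.toMatrix_trans, ← Equiv.toPEquiv_trans]
    simp [Equiv.Perm.inv_def, Equiv.self_trans_symm, Equiv.symm_trans_self, Equiv.toPEquiv_refl, PEquiv.toMatrix_refl]⟩

/-- `H^w = w⁻¹ H w`, as a subset of the group. -/
def conjSet {G : Type*} [Group G] (S : Set G) (w : G) : Set G := {g | w * g * w⁻¹ ∈ S}

/-- the set of adjacent transpositions (standard Coxeter generators) in `S_n`. -/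
def adjT (n : ℕ) : Set (Equiv.Perm (Fin n)) :=
  {σ | ∃ i j : Fin n, (i : ℕ) + 1 = (j : ℕ) ∧ σ = Equiv.swap i j}

/-- the Coxeter word length of a permutation, with respect to adjacent transpositions. -/
noncomputable def permLength {n : ℕ} (σ : Equiv.Perm (Fin n)) : ℕ :=
  sInf {k | ∃ l : List (Equiv.Perm (Fin n)),
    l.length = k ∧ (∀ τ ∈ l, τ ∈ adjT n) ∧ l.prod = σ}

open scoped Classical in
/-- the averaging element `e_S = |S|⁻¹ ∑_{h ∈ S} h` in the complex group algebra. -/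
noncomputable def eAvg {G : Type*} [Group G] [Fintype G] (S : Set G) : MonoidAlgebra ℂ G :=
  (S.toFinset.card : ℂ)⁻¹ • ∑ h ∈ S.toFinset, MonoidAlgebra.of ℂ G h

/-- the reduction-mod-`m` homomorphism `GL_n(R) → GL_n(R/m)` for a local ring `R`. -/
noncomputable def red (n : ℕ) (R : Type*) [CommRing R] [IsLocalRing R] :
    GL (Fin n) R →* GL (Fin n) (IsLocalRing.ResidueField R) :=
  Matrix.GeneralLinearGroup.map (IsLocalRing.residue R)

/-- the congruence kernel `G_0 = ker (GL_n(R) → GL_n(R/m))`. -/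
noncomputable def G0 (n : ℕ) (R : Type*) [CommRing R] [IsLocalRing R] : Set (GL (Fin n) R) :=
  {g | red n R g = 1}

variable [Fintype R] [DecidableEq R]

/-- the primitive idempotent `e_χ = |L|⁻¹ ∑_{l ∈ L} χ(l)⁻¹ l` of `C[L] ⊆ C[G]` attached to the
character `χ` of `L ≅ (Rˣ)^n`. -/
noncomputable def eChi (χ : (Fin n → Rˣ) →* ℂˣ) : MonoidAlgebra ℂ (GL (Fin n) R) :=
  (Fintype.card (Fin n → Rˣ) : ℂ)⁻¹ •
    ∑ d : Fin n → Rˣ, (((χ d)⁻¹ : ℂˣ) : ℂ) • MonoidAlgebra.of ℂ (GL (Fin n) R) (diagGL d)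

/-- the representation `i(χ) ≅ C[G] e_U e_V e_χ`, as a `ℂ`-subspace of `C[G]`
(with `G` acting by left multiplication). -/
noncomputable def Vrep (n : ℕ) (R : Type*) [CommRing R] [Fintype R] [DecidableEq R]
    (χ : (Fin n → Rˣ) →* ℂˣ) : Submodule ℂ (MonoidAlgebra ℂ (GL (Fin n) R)) :=
  LinearMap.range (LinearMap.mulRight ℂ (eAvg (Uset n R) * eAvg (Vset n R) * eChi χ))

/-- the space `Hom_G(i(χ), i(σ))` of `G`-equivariant linear maps, realised as the space of
linear maps `i(χ) → C[G]` whose image lies in `i(σ)` and which intertwine the left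
`G`-actions. -/
noncomputable def HomG (n : ℕ) (R : Type*) [CommRing R] [Fintype R] [DecidableEq R]
    (χ σ : (Fin n → Rˣ) →* ℂˣ) :
    Submodule ℂ (↥(Vrep n R χ) →ₗ[ℂ] MonoidAlgebra ℂ (GL (Fin n) R)) where
  carrier := {f | (∀ x : ↥(Vrep n R χ), f x ∈ Vrep n R σ) ∧
    ∀ (g : GL (Fin n) R) (x y : ↥(Vrep n R χ)),
      (x : MonoidAlgebra ℂ (GL (Fin n) R)) = MonoidAlgebra.of ℂ (GL (Fin n) R) g * y →
        f x = MonoidAlgebra.of ℂ (GL (Fin n) R) g * f y}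
  add_mem' := by
    rintro f g ⟨hf1, hf2⟩ ⟨hg1, hg2⟩
    exact ⟨fun x => add_mem (hf1 x) (hg1 x), fun k x y h => by
      simp only [LinearMap.add_apply, hf2 k x y h, hg2 k x y h, mul_add]⟩
  zero_mem' := ⟨fun x => zero_mem _, fun k x y h => by simp⟩
  smul_mem' := by
    rintro c f ⟨hf1, hf2⟩
    exact ⟨fun x => Submodule.smul_mem _ c (hf1 x), fun k x y h => by
      simp only [LinearMap.smul_apply, hf2 k x y h, Algebra.mul_smul_comm]⟩

end PS

namespace PS

/-- the character `χ = χ₁ ⊗ ⋯ ⊗ χ₁` of `L ≅ (Rˣ)^n` obtained from a single character `χ₁`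
of `Rˣ`. -/
def chiTup {n : ℕ} {R : Type*} [CommRing R] (χ₁ : Rˣ →* ℂˣ) : (Fin n → Rˣ) →* ℂˣ where
  toFun d := ∏ i, χ₁ (d i)
  map_one' := by simp
  map_mul' a b := by simp [Finset.prod_mul_distrib]

end PS

/-! The character `g ↦ χ₁ (det g)` of `GL_n(R)` twists the group algebra: `g ↦ χ₁ (det g) • g`
is an algebra automorphism, inverse to the twist by `χ₁⁻¹`. Unitriangular matrices have
determinant `1`, so the twist fixes `e_U` and `e_V`; on the diagonal torus `χ₁ ∘ det` is
`χ₁^{⊗n}`, so the twist sends `e_χ` to `e_1`. Hence it maps the corner algebra for `χ` onto the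
one for `1` and `i(χ) = C[G] e_U e_V e_χ` onto `i(1)`. Conjugating intertwiners by it identifies
`End_G(i(χ))` with `End_G(i(1))`, because the twist only rescales the action of each `g` by the
scalar `χ₁ (det g)`. -/

namespace MonoidAlgebra

variable {k G : Type*} [CommSemiring k] [Monoid G]

noncomputable def twistHom (c : G →* kˣ) : k[G] →ₐ[k] k[G] :=
  lift k k[G] G
    { toFun := fun g => single g (c g : k)
      map_one' := by rw [map_one, Units.val_one, one_def]
      map_mul' := fun g h => by rw [single_mul_single, map_mul, Units.val_mul] }

theorem twistHom_single (c : G →* kˣ) (g : G) (r : k) :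
    twistHom c (single g r) = single g (c g * r) := by
  rw [twistHom, lift_single, MonoidHom.coe_mk, OneHom.coe_mk, smul_single', mul_comm]

theorem twistHom_mul (c c' : G →* kˣ) :
    (twistHom c).comp (twistHom c') = twistHom (c * c') :=
  algHom_ext (fun g => by
    simp only [AlgHom.comp_apply, twistHom_single, MonoidHom.mul_apply, Units.val_mul, mul_one])
    (Subsingleton.elim _ _)

theorem twistHom_one : twistHom (1 : G →* kˣ) = AlgHom.id k k[G] :=
  algHom_ext (fun g => by
    simp only [twistHom_single, MonoidHom.one_apply, Units.val_one, mul_one, AlgHom.id_apply])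
    (Subsingleton.elim _ _)

noncomputable def twist (c : G →* kˣ) : k[G] ≃ₐ[k] k[G] :=
  AlgEquiv.ofAlgHom (twistHom c) (twistHom c⁻¹)
    (by rw [twistHom_mul, mul_inv_cancel c, twistHom_one])
    (by rw [twistHom_mul, inv_mul_cancel c, twistHom_one])

theorem twist_symm (c : G →* kˣ) : (twist c).symm = twist c⁻¹ := rfl

theorem twist_of (c : G →* kˣ) (g : G) : twist c (of k G g) = (c g : k) • of k G g := by
  show twistHom c (single g 1) = _
  rw [twistHom_single, of_apply, smul_single', mul_one]

end MonoidAlgebra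

theorem LinearMap.map_range_mulRight {k A B : Type*} [CommSemiring k] [Semiring A] [Semiring B]
    [Algebra k A] [Algebra k B] (T : A ≃ₐ[k] B) (a : A) :
    (LinearMap.range (LinearMap.mulRight k a)).map T.toLinearMap =
      LinearMap.range (LinearMap.mulRight k (T a)) := by
  have hcomm : T.toLinearMap ∘ₗ LinearMap.mulRight k a =
      LinearMap.mulRight k (T a) ∘ₗ T.toLinearMap :=
    LinearMap.ext fun x => map_mul T x a
  rw [← LinearMap.range_comp, hcomm, LinearMap.range_comp_of_range_eq_top _
    (LinearMap.range_eq_top.mpr T.surjective)]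

theorem Set.image_setOf_exists_eq {α β F : Type*} [EquivLike F α β] (T : F) {f : α → α}
    {g : β → β} (h : ∀ y, T (f y) = g (T y)) :
    T '' {x | ∃ y, x = f y} = {x | ∃ y, x = g y} := by
  ext x
  constructor
  · rintro ⟨_, ⟨y, rfl⟩, rfl⟩
    exact ⟨T y, h y⟩
  · rintro ⟨y, rfl⟩
    obtain ⟨y, rfl⟩ := EquivLike.surjective T y
    exact ⟨f y, ⟨y, rfl⟩, h y⟩

namespace PS

theorem twist_eAvg {G : Type*} [Group G] [Fintype G] (c : G →* ℂˣ) {S : Set G}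
    (hS : ∀ g ∈ S, c g = 1) : twist c (eAvg S) = eAvg S := by
  classical
  simp only [eAvg, map_smul, map_sum]
  congr 1
  refine Finset.sum_congr rfl fun g hg => ?_
  rw [twist_of, hS g (Set.mem_toFinset.mp hg), Units.val_one, one_smul]

variable {n : ℕ} {R : Type*} [CommRing R]

theorem IsU.det_eq_one {g : GL (Fin n) R} (hg : IsU g) : GeneralLinearGroup.det g = 1 := by
  ext
  rw [GeneralLinearGroup.val_det_apply,
    det_of_isUpperTriangular (M := (g : Matrix (Fin n) (Fin n) R)) fun _ _ h => hg.2 _ _ h]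
  simp [hg.1]

theorem IsV.det_eq_one {g : GL (Fin n) R} (hg : IsV g) : GeneralLinearGroup.det g = 1 := by
  ext
  rw [GeneralLinearGroup.val_det_apply,
    det_of_isLowerTriangular (g : Matrix (Fin n) (Fin n) R) fun _ _ h => hg.2 _ _ h]
  simp [hg.1]

theorem det_diagGL (d : Fin n → Rˣ) : GeneralLinearGroup.det (diagGL (R := R) d) = ∏ i, d i := by
  ext
  rw [GeneralLinearGroup.val_det_apply, Units.coe_prod]
  exact det_diagonal

variable [Fintype R] [DecidableEq R]

local notation "𝒜" => MonoidAlgebra ℂ (GL (Fin n) R)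

theorem twist_eChi (c : GL (Fin n) R →* ℂˣ) {χ ψ : (Fin n → Rˣ) →* ℂˣ}
    (h : ∀ d, c (diagGL d) * ψ d = χ d) : twist c (eChi χ) = eChi ψ := by
  simp only [eChi, map_smul, map_sum]
  congr 1
  refine Finset.sum_congr rfl fun d _ => ?_
  rw [twist_of, smul_smul, ← h d, ← Units.val_mul, _root_.mul_inv_rev, inv_mul_cancel_right]

section DetTwist

variable (χ₁ : Rˣ →* ℂˣ)

theorem twist_det_eAvg_Uset :
    twist (χ₁.comp GeneralLinearGroup.det) (eAvg (Uset n R)) = eAvg (Uset n R) :=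
  twist_eAvg _ fun _ hg => by rw [MonoidHom.comp_apply, IsU.det_eq_one hg, map_one]

theorem twist_det_eAvg_Vset :
    twist (χ₁.comp GeneralLinearGroup.det) (eAvg (Vset n R)) = eAvg (Vset n R) :=
  twist_eAvg _ fun _ hg => by rw [MonoidHom.comp_apply, IsV.det_eq_one hg, map_one]

theorem twist_det_eChi_chiTup :
    twist (χ₁.comp GeneralLinearGroup.det) (eChi (n := n) (R := R) (chiTup χ₁)) = eChi 1 :=
  twist_eChi _ fun d => by
    rw [MonoidHom.comp_apply, det_diagGL, map_prod, MonoidHom.one_apply, mul_one]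
    rfl

theorem map_twist_det_Vrep :
    (Vrep n R (chiTup χ₁)).map (twist (χ₁.comp GeneralLinearGroup.det)).toLinearMap =
      Vrep n R 1 := by
  rw [Vrep, LinearMap.map_range_mulRight, map_mul, map_mul, twist_det_eAvg_Uset,
    twist_det_eAvg_Vset, twist_det_eChi_chiTup, Vrep]

end DetTwist

theorem arrowCongr_twist_mem_homG (c : GL (Fin n) R →* ℂˣ) {χ χ' σ σ' : (Fin n → Rˣ) →* ℂˣ}
    (Ψ : Vrep n R χ ≃ₗ[ℂ] Vrep n R χ') (hΨ : ∀ v, (Ψ v : 𝒜) = twist c v)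
    (hσ : ∀ x ∈ Vrep n R σ, twist c x ∈ Vrep n R σ') {f : Vrep n R χ →ₗ[ℂ] 𝒜}
    (hf : f ∈ HomG n R χ σ) :
    LinearEquiv.arrowCongr Ψ (twist c).toLinearEquiv f ∈ HomG n R χ' σ' := by
  refine ⟨fun x => hσ _ (hf.1 _), fun g x y hxy => ?_⟩
  have hcg : (c g : ℂ) * ((c g)⁻¹ : ℂˣ) = 1 := (c g).mul_inv
  have hx : (Ψ.symm x : 𝒜) = of ℂ _ g * ((((c g)⁻¹ : ℂˣ) : ℂ) • Ψ.symm y : Vrep n R χ) := by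
    apply (twist c).injective
    rw [Submodule.coe_smul, map_mul, map_smul, twist_of, ← hΨ, ← hΨ, LinearEquiv.apply_symm_apply,
      LinearEquiv.apply_symm_apply, hxy, smul_mul_smul_comm, hcg, one_smul]
  show twist c (f (Ψ.symm x)) = of ℂ _ g * twist c (f (Ψ.symm y))
  rw [hf.2 g _ _ hx, map_smul, map_mul, map_smul, twist_of, smul_mul_smul_comm, hcg, one_smul]

theorem map_arrowCongr_twist_homG (c : GL (Fin n) R →* ℂˣ) {χ χ' σ σ' : (Fin n → Rˣ) →* ℂˣ}
    (Ψ : Vrep n R χ ≃ₗ[ℂ] Vrep n R χ') (hΨ : ∀ v, (Ψ v : 𝒜) = twist c v)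
    (hσ : (Vrep n R σ).map (twist c).toLinearMap = Vrep n R σ') :
    (HomG n R χ σ).map (LinearEquiv.arrowCongr Ψ (twist c).toLinearEquiv :
      (Vrep n R χ →ₗ[ℂ] 𝒜) ≃ₗ[ℂ] (Vrep n R χ' →ₗ[ℂ] 𝒜)).toLinearMap =
      HomG n R χ' σ' := by
  refine le_antisymm ?_ fun f hf => (Submodule.mem_map_equiv _).mpr ?_
  · rintro _ ⟨f, hf, rfl⟩
    exact arrowCongr_twist_mem_homG c Ψ hΨ (fun x hx => hσ ▸ ⟨x, hx, rfl⟩) hf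
  · have hΨsymm (v : Vrep n R χ') : (Ψ.symm v : 𝒜) = twist c⁻¹ v := by
      rw [← twist_symm, AlgEquiv.eq_symm_apply, ← hΨ, LinearEquiv.apply_symm_apply]
    have hσsymm (x) (hx : x ∈ Vrep n R σ') : twist c⁻¹ x ∈ Vrep n R σ := by
      rw [← hσ] at hx
      obtain ⟨y, hy, rfl⟩ := hx
      rw [AlgEquiv.toLinearMap_apply, ← twist_symm, AlgEquiv.symm_apply_apply]
      exact hy
    convert arrowCongr_twist_mem_homG c⁻¹ Ψ.symm hΨsymm hσsymm hf using 1
    ext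
    rfl

noncomputable def homGTwistEquiv (c : GL (Fin n) R →* ℂˣ) {χ χ' σ σ' : (Fin n → Rˣ) →* ℂˣ}
    (hχ : (Vrep n R χ).map (twist c).toLinearMap = Vrep n R χ')
    (hσ : (Vrep n R σ).map (twist c).toLinearMap = Vrep n R σ') :
    HomG n R χ σ ≃ₗ[ℂ] HomG n R χ' σ' :=
  (LinearEquiv.arrowCongr ((twist c).toLinearEquiv.ofSubmodules _ _ hχ)
    (twist c).toLinearEquiv).ofSubmodules _ _ (map_arrowCongr_twist_homG c _ (fun _ => rfl) hσ)

theorem homGTwistEquiv_comp (c : GL (Fin n) R →* ℂˣ) {χ χ' : (Fin n → Rˣ) →* ℂˣ}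
    (hχ : (Vrep n R χ).map (twist c).toLinearMap = Vrep n R χ') {x y z : HomG n R χ χ}
    (h : ∀ v v' : Vrep n R χ, (v' : 𝒜) = (y : Vrep n R χ →ₗ[ℂ] 𝒜) v →
      (z : Vrep n R χ →ₗ[ℂ] 𝒜) v = (x : Vrep n R χ →ₗ[ℂ] 𝒜) v')
    (v v' : Vrep n R χ') (hv : (v' : 𝒜) = (homGTwistEquiv c hχ hχ y : Vrep n R χ' →ₗ[ℂ] 𝒜) v) :
    (homGTwistEquiv c hχ hχ z : Vrep n R χ' →ₗ[ℂ] 𝒜) v =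
      (homGTwistEquiv c hχ hχ x : Vrep n R χ' →ₗ[ℂ] 𝒜) v' := by
  show twist c _ = twist c _
  refine congrArg (twist c) (h _ _ ?_)
  show (twist c).symm v' = _
  rw [hv]
  exact (twist c).symm_apply_apply _

end PS

open PS in
theorem twist_by_det_general (n : ℕ) (R : Type*) [CommRing R]
    [Fintype R] [DecidableEq R] (χ₁ : Rˣ →* ℂˣ) :
    (∃ T : MonoidAlgebra ℂ (GL (Fin n) R) ≃ₐ[ℂ] MonoidAlgebra ℂ (GL (Fin n) R),
      (∀ g : GL (Fin n) R,
        T (MonoidAlgebra.of ℂ (GL (Fin n) R) g) =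
          ((χ₁ (Matrix.GeneralLinearGroup.det g) : ℂˣ) : ℂ) •
            MonoidAlgebra.of ℂ (GL (Fin n) R) g) ∧
      T '' {a | ∃ y, a = eChi (chiTup χ₁) * eAvg (Uset n R) * eAvg (Vset n R) * y *
              eAvg (Uset n R) * eAvg (Vset n R) * eChi (chiTup χ₁)} =
        {a | ∃ y, a = eChi (1 : (Fin n → Rˣ) →* ℂˣ) * eAvg (Uset n R) * eAvg (Vset n R) * y *
              eAvg (Uset n R) * eAvg (Vset n R) * eChi (1 : (Fin n → Rˣ) →* ℂˣ)}) ∧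
    ∃ e : ↥(HomG n R (chiTup χ₁) (chiTup χ₁)) ≃ ↥(HomG n R 1 1),
      (∀ x y z : ↥(HomG n R (chiTup χ₁) (chiTup χ₁)),
        (∀ v v' : ↥(Vrep n R (chiTup χ₁)),
          (v' : MonoidAlgebra ℂ (GL (Fin n) R)) = (y : ↥(Vrep n R (chiTup χ₁)) →ₗ[ℂ] MonoidAlgebra ℂ (GL (Fin n) R)) v →
            (z : ↥(Vrep n R (chiTup χ₁)) →ₗ[ℂ] MonoidAlgebra ℂ (GL (Fin n) R)) v =
              (x : ↥(Vrep n R (chiTup χ₁)) →ₗ[ℂ] MonoidAlgebra ℂ (GL (Fin n) R)) v') →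
        ∀ v v' : ↥(Vrep n R 1),
          (v' : MonoidAlgebra ℂ (GL (Fin n) R)) = (e y : ↥(Vrep n R 1) →ₗ[ℂ] MonoidAlgebra ℂ (GL (Fin n) R)) v →
            (e z : ↥(Vrep n R 1) →ₗ[ℂ] MonoidAlgebra ℂ (GL (Fin n) R)) v = (e x : ↥(Vrep n R 1) →ₗ[ℂ] MonoidAlgebra ℂ (GL (Fin n) R)) v') ∧
      (∀ x y z : ↥(HomG n R (chiTup χ₁) (chiTup χ₁)),
        (z : ↥(Vrep n R (chiTup χ₁)) →ₗ[ℂ] MonoidAlgebra ℂ (GL (Fin n) R)) =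
            (x : ↥(Vrep n R (chiTup χ₁)) →ₗ[ℂ] MonoidAlgebra ℂ (GL (Fin n) R)) +
              (y : ↥(Vrep n R (chiTup χ₁)) →ₗ[ℂ] MonoidAlgebra ℂ (GL (Fin n) R)) →
        (e z : ↥(Vrep n R 1) →ₗ[ℂ] MonoidAlgebra ℂ (GL (Fin n) R)) =
          (e x : ↥(Vrep n R 1) →ₗ[ℂ] MonoidAlgebra ℂ (GL (Fin n) R)) + (e y : ↥(Vrep n R 1) →ₗ[ℂ] MonoidAlgebra ℂ (GL (Fin n) R))) ∧
      ∀ (c : ℂ) (x z : ↥(HomG n R (chiTup χ₁) (chiTup χ₁))),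
        (z : ↥(Vrep n R (chiTup χ₁)) →ₗ[ℂ] MonoidAlgebra ℂ (GL (Fin n) R)) =
            c • (x : ↥(Vrep n R (chiTup χ₁)) →ₗ[ℂ] MonoidAlgebra ℂ (GL (Fin n) R)) →
        (e z : ↥(Vrep n R 1) →ₗ[ℂ] MonoidAlgebra ℂ (GL (Fin n) R)) = c • (e x : ↥(Vrep n R 1) →ₗ[ℂ] MonoidAlgebra ℂ (GL (Fin n) R)) := by
  have hVrep := map_twist_det_Vrep (n := n) χ₁
  set e := homGTwistEquiv _ hVrep hVrep
  refine ⟨⟨twist (χ₁.comp GeneralLinearGroup.det), twist_of _,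
      Set.image_setOf_exists_eq _ fun y => ?_⟩,
    e.toEquiv, fun x y z => homGTwistEquiv_comp _ hVrep, fun x y z h => ?_, fun a x z h => ?_⟩
  · simp only [map_mul, twist_det_eAvg_Uset, twist_det_eAvg_Vset, twist_det_eChi_chiTup]
  · rw [show z = x + y from Subtype.ext h]
    exact congrArg Subtype.val (e.map_add x y)
  · rw [show z = a • x from Subtype.ext h]
    exact congrArg Subtype.val (e.map_smul a x)

set_option synthInstance.maxHeartbeats 1000000 in
set_option maxHeartbeats 1000000 in
open PS in
/-- Lemma 3.10: for `χ = χ₁^{⊗n}`, the map `g ↦ χ₁(det g)·g` extends to an algebra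
automorphism of `C[G]` carrying `e_χ e_U e_V C[G] e_U e_V e_χ` onto
`e_L e_U e_V C[G] e_U e_V e_L`; in particular `End_G(i(χ)) ≅ End_G(i(1_L))` as
`ℂ`-algebras. -/
theorem twist_by_det (n : ℕ) (R : Type*) [CommRing R] [IsLocalRing R]
    [Fintype R] [DecidableEq R] (χ₁ : Rˣ →* ℂˣ) :
    (∃ T : MonoidAlgebra ℂ (GL (Fin n) R) ≃ₐ[ℂ] MonoidAlgebra ℂ (GL (Fin n) R),
      (∀ g : GL (Fin n) R,
        T (MonoidAlgebra.of ℂ (GL (Fin n) R) g) =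
          ((χ₁ (Matrix.GeneralLinearGroup.det g) : ℂˣ) : ℂ) •
            MonoidAlgebra.of ℂ (GL (Fin n) R) g) ∧
      T '' {a | ∃ y, a = eChi (chiTup χ₁) * eAvg (Uset n R) * eAvg (Vset n R) * y *
              eAvg (Uset n R) * eAvg (Vset n R) * eChi (chiTup χ₁)} =
        {a | ∃ y, a = eChi (1 : (Fin n → Rˣ) →* ℂˣ) * eAvg (Uset n R) * eAvg (Vset n R) * y *
              eAvg (Uset n R) * eAvg (Vset n R) * eChi (1 : (Fin n → Rˣ) →* ℂˣ)}) ∧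
    ∃ e : ↥(HomG n R (chiTup χ₁) (chiTup χ₁)) ≃ ↥(HomG n R 1 1),
      (∀ x y z : ↥(HomG n R (chiTup χ₁) (chiTup χ₁)),
        (∀ v v' : ↥(Vrep n R (chiTup χ₁)),
          (v' : MonoidAlgebra ℂ (GL (Fin n) R)) = (y : ↥(Vrep n R (chiTup χ₁)) →ₗ[ℂ] MonoidAlgebra ℂ (GL (Fin n) R)) v →
            (z : ↥(Vrep n R (chiTup χ₁)) →ₗ[ℂ] MonoidAlgebra ℂ (GL (Fin n) R)) v =
              (x : ↥(Vrep n R (chiTup χ₁)) →ₗ[ℂ] MonoidAlgebra ℂ (GL (Fin n) R)) v') →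
        ∀ v v' : ↥(Vrep n R 1),
          (v' : MonoidAlgebra ℂ (GL (Fin n) R)) = (e y : ↥(Vrep n R 1) →ₗ[ℂ] MonoidAlgebra ℂ (GL (Fin n) R)) v →
            (e z : ↥(Vrep n R 1) →ₗ[ℂ] MonoidAlgebra ℂ (GL (Fin n) R)) v = (e x : ↥(Vrep n R 1) →ₗ[ℂ] MonoidAlgebra ℂ (GL (Fin n) R)) v') ∧
      (∀ x y z : ↥(HomG n R (chiTup χ₁) (chiTup χ₁)),
        (z : ↥(Vrep n R (chiTup χ₁)) →ₗ[ℂ] MonoidAlgebra ℂ (GL (Fin n) R)) =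
            (x : ↥(Vrep n R (chiTup χ₁)) →ₗ[ℂ] MonoidAlgebra ℂ (GL (Fin n) R)) +
              (y : ↥(Vrep n R (chiTup χ₁)) →ₗ[ℂ] MonoidAlgebra ℂ (GL (Fin n) R)) →
        (e z : ↥(Vrep n R 1) →ₗ[ℂ] MonoidAlgebra ℂ (GL (Fin n) R)) =
          (e x : ↥(Vrep n R 1) →ₗ[ℂ] MonoidAlgebra ℂ (GL (Fin n) R)) + (e y : ↥(Vrep n R 1) →ₗ[ℂ] MonoidAlgebra ℂ (GL (Fin n) R))) ∧
      ∀ (c : ℂ) (x z : ↥(HomG n R (chiTup χ₁) (chiTup χ₁))),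
        (z : ↥(Vrep n R (chiTup χ₁)) →ₗ[ℂ] MonoidAlgebra ℂ (GL (Fin n) R)) =
            c • (x : ↥(Vrep n R (chiTup χ₁)) →ₗ[ℂ] MonoidAlgebra ℂ (GL (Fin n) R)) →
        (e z : ↥(Vrep n R 1) →ₗ[ℂ] MonoidAlgebra ℂ (GL (Fin n) R)) = c • (e x : ↥(Vrep n R 1) →ₗ[ℂ] MonoidAlgebra ℂ (GL (Fin n) R)) :=
  twist_by_det_general n R χ₁
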